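/- arXiv:0802.0820 — 3 statements merged into one kernel-verified Lean document; each statement's English description precedes it below -/
import Mathlib

section
/- Let P be a relation on control conditions, and let M, M' be markings and e an event of an embedded net whose pre- and post-control conditions lie in the domain of applicability of gluing. Then M →e M' if and only if (P ▷ M) →(P ▷ e) (P ▷ M'), where P ▷ applied to a marking affects only its control conditions and to an event affects only its pre- and post-control conditions. Moreover, if (P ▷ M) →(P ▷ e) M₁' then M₁' = P ▷ M' for some M'. -/
/-- Token-game firing for an event with precondition set `pre` and postcondition set
`post`, from marking `M` to marking `M'`. -/
def Fires {B : Type*} (pre post : Set B) (M M' : Set B) : Prop :=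
  pre ⊆ M ∧ (M \ pre) ∩ post = ∅ ∧ M' = (M \ pre) ∪ post

/-- Left-gluing of a set of control conditions along `P`. -/
def glueL {C : Type*} (P : Set (C × C)) (S : Set C) : Set (C ⊕ C × C) :=
  {x | ∃ c₁ c₂, x = Sum.inr (c₁, c₂) ∧ c₁ ∈ S ∧ (c₁, c₂) ∈ P} ∪
  {x | ∃ c₁, x = Sum.inl c₁ ∧ c₁ ∈ S ∧ ¬ ∃ c₂, (c₁, c₂) ∈ P}

/-!
Gluing is the map `S ↦ glueDomain P ∩ glueBase ⁻¹' S`, where `glueBase` sends a glued condition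
to the control condition it comes from and `glueDomain P` is the set of glued conditions that
actually occur. Since `glueBase` maps `glueDomain P` onto `C`, this map is injective and
preserves `⊆`, `∅`, `\`, `∩` and `∪`; the token game is defined from these operations alone, so
firing is reflected and preserved, and the successor marking of a glued event is the gluing of
`(Cm \ preC) ∪ postC`.
-/

open Set

section InterPreimage

variable {α β : Type*} {f : α → β} {D : Set α}

theorem inter_preimage_subset_inter_preimage_iff (hf : SurjOn f D univ) {S T : Set β} :
    D ∩ f ⁻¹' S ⊆ D ∩ f ⁻¹' T ↔ S ⊆ T := by
  refine ⟨fun h b hb => ?_, fun h => inter_subset_inter_right D (preimage_mono h)⟩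
  obtain ⟨a, ha, rfl⟩ := hf (mem_univ b)
  exact (h ⟨ha, hb⟩).2

theorem inter_preimage_injective (hf : SurjOn f D univ) :
    Function.Injective fun S : Set β => D ∩ f ⁻¹' S := fun _ _ h =>
  (inter_preimage_subset_inter_preimage_iff hf).1 h.le |>.antisymm
    ((inter_preimage_subset_inter_preimage_iff hf).1 h.ge)

theorem inter_preimage_eq_empty_iff (hf : SurjOn f D univ) {S : Set β} :
    D ∩ f ⁻¹' S = ∅ ↔ S = ∅ := by
  simpa only [subset_empty_iff, preimage_empty, inter_empty] using
    inter_preimage_subset_inter_preimage_iff hf (S := S) (T := ∅)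

theorem inter_preimage_diff (D : Set α) (f : α → β) (S T : Set β) :
    D ∩ f ⁻¹' (S \ T) = (D ∩ f ⁻¹' S) \ (D ∩ f ⁻¹' T) := by
  ext; simp only [mem_inter_iff, mem_sdiff, mem_preimage]; tauto

theorem inter_preimage_inter (D : Set α) (f : α → β) (S T : Set β) :
    D ∩ f ⁻¹' (S ∩ T) = (D ∩ f ⁻¹' S) ∩ (D ∩ f ⁻¹' T) := by
  rw [preimage_inter, inter_inter_distrib_left]

theorem inter_preimage_union (D : Set α) (f : α → β) (S T : Set β) :
    D ∩ f ⁻¹' (S ∪ T) = (D ∩ f ⁻¹' S) ∪ (D ∩ f ⁻¹' T) := by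
  rw [preimage_union, inter_union_distrib_left]

theorem fires_inter_preimage_iff (hf : SurjOn f D univ) {pre post M M' : Set β} :
    Fires (D ∩ f ⁻¹' pre) (D ∩ f ⁻¹' post) (D ∩ f ⁻¹' M) (D ∩ f ⁻¹' M') ↔
      Fires pre post M M' := by
  simp only [Fires, ← inter_preimage_diff, ← inter_preimage_inter, ← inter_preimage_union,
    inter_preimage_subset_inter_preimage_iff hf, inter_preimage_eq_empty_iff hf,
    (inter_preimage_injective hf).eq_iff]

end InterPreimage

section Gluing

variable {C : Type*} (P : Set (C × C))

def glueDomain : Set (C ⊕ C × C) :=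
  Sum.inl '' {c | ¬ ∃ c₂, (c, c₂) ∈ P} ∪ Sum.inr '' P

def glueBase : C ⊕ C × C → C :=
  Sum.elim id Prod.fst

theorem glueL_eq_inter_preimage (S : Set C) :
    glueL P S = glueDomain P ∩ glueBase ⁻¹' S := by
  ext (c | ⟨c₁, c₂⟩) <;> simp [glueL, glueDomain, glueBase] <;> tauto

theorem surjOn_glueBase : SurjOn glueBase (glueDomain P) univ := by
  intro c _
  by_cases h : ∃ c₂, (c, c₂) ∈ P
  · obtain ⟨c₂, hc⟩ := h
    exact ⟨Sum.inr (c, c₂), Or.inr (mem_image_of_mem _ hc), rfl⟩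
  · exact ⟨Sum.inl c, Or.inl (mem_image_of_mem _ h), rfl⟩

theorem fires_glueL_iff {pre post M M' : Set C} :
    Fires (glueL P pre) (glueL P post) (glueL P M) (glueL P M') ↔ Fires pre post M M' := by
  simp only [glueL_eq_inter_preimage]
  exact fires_inter_preimage_iff (surjOn_glueBase P)

theorem Fires.glueL_eq {pre post M : Set C} {M₁ : Set (C ⊕ C × C)}
    (h : Fires (glueL P pre) (glueL P post) (glueL P M) M₁) :
    M₁ = glueL P (M \ pre ∪ post) := by
  rw [h.2.2]
  simp only [glueL_eq_inter_preimage, inter_preimage_union, inter_preimage_diff]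

end Gluing

/-- Firing of an event of an embedded net on a marking `(C, σ)` splitting into
control and state conditions; gluing affects only the control part. -/
theorem glue_preserves_firing {C St : Type*} (P : Set (C × C))
    (preC postC : Set C) (preS postS : Set St)
    (Cm Cm' : Set C) (σ σ' : Set St) :
    ((Fires preC postC Cm Cm' ∧ Fires preS postS σ σ') ↔
      (Fires (glueL P preC) (glueL P postC) (glueL P Cm) (glueL P Cm') ∧
        Fires preS postS σ σ')) ∧
    (∀ (M₁ : Set (C ⊕ C × C)) (σ₁ : Set St),
      (Fires (glueL P preC) (glueL P postC) (glueL P Cm) M₁ ∧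
        Fires preS postS σ σ₁) →
      ∃ Cm'', M₁ = glueL P Cm'') :=
  ⟨and_congr_left fun _ => (fires_glueL_iff P).symm,
    fun _ _ h => ⟨_, h.1.glueL_eq P⟩⟩
end

section
/- In the net semantics ⟦t₁ ∥ t₂⟧ of a parallel composition, whose events are the disjoint tagged unions 1:ev⟦t₁⟧ ∪ 2:ev⟦t₂⟧ and whose initial/terminal control markings are 1:Ic(t₁) ∪ 2:Ic(t₂) and 1:Tc(t₁) ∪ 2:Tc(t₂): if 1:C₁ ∪ 2:C₂ →e,ctrl C' then either e = 1:e₁ for some e₁ ∈ ev⟦t₁⟧ with C₁ →e₁,ctrl C₁' in ⟦t₁⟧ and C' = 1:C₁' ∪ 2:C₂, or symmetrically e = 2:e₂ for some e₂ ∈ ev⟦t₂⟧ with C₂ →e₂,ctrl C₂' in ⟦t₂⟧ and C' = 1:C₁ ∪ 2:C₂'. -/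
/-- An embedded net restricted to control conditions. -/
structure ENet (Ctrl E : Type*) where
  ic : Set Ctrl
  tc : Set Ctrl
  ev : Set E
  preC : E → Set Ctrl
  postC : E → Set Ctrl

/-- The token game restricted to the control conditions of an event. -/
def firesC {Ctrl E : Type*} (N : ENet Ctrl E) (C : Set Ctrl) (e : E) (C' : Set Ctrl) : Prop :=
  N.preC e ⊆ C ∧ (C \ N.preC e) ∩ N.postC e = ∅ ∧ C' = (C \ N.preC e) ∪ N.postC e

/-- The net semantics of parallel composition: events and control conditions of the
two component nets are tagged disjointly and unioned. -/
def parNet {Ctrl E₁ E₂ : Type*} (tag1 tag2 : Ctrl → Ctrl)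
    (N₁ : ENet Ctrl E₁) (N₂ : ENet Ctrl E₂) : ENet Ctrl (E₁ ⊕ E₂) where
  ic := tag1 '' N₁.ic ∪ tag2 '' N₂.ic
  tc := tag1 '' N₁.tc ∪ tag2 '' N₂.tc
  ev := Sum.inl '' N₁.ev ∪ Sum.inr '' N₂.ev
  preC := Sum.elim (fun e => tag1 '' N₁.preC e) (fun e => tag2 '' N₂.preC e)
  postC := Sum.elim (fun e => tag1 '' N₁.postC e) (fun e => tag2 '' N₂.postC e)

/-! Since tagging is injective and the two tags have disjoint images, removing the
`1:`-tagged preset of `1:e₁` from `1:C₁ ∪ 2:C₂` leaves `1:(C₁ \ pre e₁) ∪ 2:C₂`; so each side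
condition of the token game untags to the corresponding one for `e₁` in the first component,
and the second component is carried along unchanged. The case `2:e₂` is symmetric. -/

open Set Function

section TaggedUnion

variable {α β γ : Type*} {f : α → γ} {g : β → γ}

theorem subset_of_image_subset_union_image (hf : Injective f)
    (hfg : Disjoint (range f) (range g)) {P C : Set α} {D : Set β}
    (h : f '' P ⊆ f '' C ∪ g '' D) : P ⊆ C :=
  (image_subset_image_iff hf).1 <| Disjoint.subset_left_of_subset_union h <|
    hfg.mono (image_subset_range f P) (image_subset_range g D)

theorem union_image_sdiff_image (hf : Injective f) (hfg : Disjoint (range f) (range g))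
    (C P : Set α) (D : Set β) : (f '' C ∪ g '' D) \ f '' P = f '' (C \ P) ∪ g '' D := by
  have hDP : Disjoint (g '' D) (f '' P) :=
    hfg.symm.mono (image_subset_range g D) (image_subset_range f P)
  rw [union_sdiff_distrib, image_sdiff hf, hDP.sdiff_eq_left]

theorem inter_eq_empty_of_union_image_inter_image (hf : Injective f) {X Q : Set α} {D : Set β}
    (h : (f '' X ∪ g '' D) ∩ f '' Q = ∅) : X ∩ Q = ∅ := by
  rw [union_inter_distrib_right, union_empty_iff, ← image_inter hf, image_eq_empty] at h
  exact h.1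

theorem firesC_image_union {E E' : Type*} {N : ENet γ E} {M : ENet α E'}
    (hf : Injective f) (hfg : Disjoint (range f) (range g)) {e : E} {e' : E'}
    (hpre : N.preC e = f '' M.preC e') (hpost : N.postC e = f '' M.postC e')
    {C : Set α} {D : Set β} {C' : Set γ} (h : firesC N (f '' C ∪ g '' D) e C') :
    ∃ C₁', firesC M C e' C₁' ∧ C' = f '' C₁' ∪ g '' D := by
  rw [firesC, hpre, hpost, union_image_sdiff_image hf hfg] at h
  obtain ⟨hsub, hdisj, rfl⟩ := h
  refine ⟨(C \ M.preC e') ∪ M.postC e', ⟨subset_of_image_subset_union_image hf hfg hsub,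
    inter_eq_empty_of_union_image_inter_image hf hdisj, rfl⟩, ?_⟩
  rw [image_union, union_right_comm]

end TaggedUnion

theorem parNet_step_decomposition {Ctrl E₁ E₂ : Type*} (tag1 tag2 : Ctrl → Ctrl)
    (h1 : Function.Injective tag1) (h2 : Function.Injective tag2)
    (hd : ∀ c c', tag1 c ≠ tag2 c')
    (N₁ : ENet Ctrl E₁) (N₂ : ENet Ctrl E₂)
    (C₁ C₂ C' : Set Ctrl) (e : E₁ ⊕ E₂)
    (he : e ∈ (parNet tag1 tag2 N₁ N₂).ev)
    (hf : firesC (parNet tag1 tag2 N₁ N₂) (tag1 '' C₁ ∪ tag2 '' C₂) e C') :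
    (∃ e₁ ∈ N₁.ev, e = Sum.inl e₁ ∧
      ∃ C₁', firesC N₁ C₁ e₁ C₁' ∧ C' = tag1 '' C₁' ∪ tag2 '' C₂) ∨
    (∃ e₂ ∈ N₂.ev, e = Sum.inr e₂ ∧
      ∃ C₂', firesC N₂ C₂ e₂ C₂' ∧ C' = tag1 '' C₁ ∪ tag2 '' C₂') := by
  have hdisj : Disjoint (range tag1) (range tag2) := disjoint_range_iff.2 hd
  rcases he with ⟨e₁, he₁, rfl⟩ | ⟨e₂, he₂, rfl⟩
  · exact Or.inl ⟨e₁, he₁, rfl, firesC_image_union h1 hdisj rfl rfl hf⟩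
  · rw [union_comm] at hf
    obtain ⟨C₂', hstep, rfl⟩ := firesC_image_union h2 hdisj.symm rfl rfl hf
    exact Or.inr ⟨e₂, he₂, rfl, C₂', hstep, union_comm _ _⟩
end

section
/- The ownership-split relation is symmetric and 'associative' in the following sense: if W₁, W₂ form an ownership split of W, then W₂, W₁ also form an ownership split of W; and if moreover W₁₁, W₁₂ form an ownership split of W₁, then W₁₁ and some marking W' form an ownership split of W, where W₁₂, W₂ form an ownership split of W' — provided all markings involved are consistent (at most one ownership symbol per z, and z has a symbol in W₁ iff it has one in W₂ iff it has one in W). -/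
/-- Ownership conditions for elements `z` of `Loc ∪ Res`. -/
inductive OCond (Z : Type*) : Type _
  | proc (z : Z) : OCond Z
  | inv (z : Z) : OCond Z
  | oth (z : Z) : OCond Z

/-- `W₁` and `W₂` form an ownership split of `W`. -/
def OSplit {Z : Type*} (W W₁ W₂ : Set (OCond Z)) : Prop := ∀ z : Z,
  (OCond.oth z ∈ W ↔ OCond.oth z ∈ W₁ ∧ OCond.oth z ∈ W₂) ∧
  (OCond.inv z ∈ W ↔ OCond.inv z ∈ W₁ ∧ OCond.inv z ∈ W₂) ∧
  (OCond.proc z ∈ W ↔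
    ((OCond.proc z ∈ W₁ ∧ OCond.oth z ∈ W₂) ∨ (OCond.proc z ∈ W₂ ∧ OCond.oth z ∈ W₁)))

/-- Consistency: at most one ownership symbol per `z`. -/
def OConsistent {Z : Type*} (W : Set (OCond Z)) : Prop := ∀ z : Z,
  ¬ (OCond.proc z ∈ W ∧ OCond.inv z ∈ W) ∧
  ¬ (OCond.proc z ∈ W ∧ OCond.oth z ∈ W) ∧
  ¬ (OCond.inv z ∈ W ∧ OCond.oth z ∈ W)

/-- `z` is mentioned by the ownership marking `W`. -/
def owns {Z : Type*} (W : Set (OCond Z)) (z : Z) : Prop :=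
  OCond.proc z ∈ W ∨ OCond.inv z ∈ W ∨ OCond.oth z ∈ W

section

variable {Z : Type*}

/-- `OSplit W W₁ W₂` determines `W` from `W₁` and `W₂` symbol by symbol, so this is the only
witness possible in the associativity law. -/
def ownershipJoin (W₁ W₂ : Set (OCond Z)) : Set (OCond Z) := fun
  | .proc z => (OCond.proc z ∈ W₁ ∧ OCond.oth z ∈ W₂) ∨ (OCond.proc z ∈ W₂ ∧ OCond.oth z ∈ W₁)
  | .inv z => OCond.inv z ∈ W₁ ∧ OCond.inv z ∈ W₂
  | .oth z => OCond.oth z ∈ W₁ ∧ OCond.oth z ∈ W₂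

theorem osplit_ownershipJoin (W₁ W₂ : Set (OCond Z)) : OSplit (ownershipJoin W₁ W₂) W₁ W₂ :=
  fun _ => ⟨Iff.rfl, Iff.rfl, Iff.rfl⟩

namespace OSplit

variable {W W₁ W₂ : Set (OCond Z)}

theorem symm (h : OSplit W W₁ W₂) : OSplit W W₂ W₁ := fun z =>
  let ⟨hoth, hinv, hproc⟩ := h z
  ⟨hoth.trans and_comm, hinv.trans and_comm, hproc.trans or_comm⟩

theorem oconsistent (h : OSplit W W₁ W₂) (h₁ : OConsistent W₁) (h₂ : OConsistent W₂) :
    OConsistent W := fun z => by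
  obtain ⟨hoth, hinv, hproc⟩ := h z
  obtain ⟨hpo₁, hio₁⟩ := (h₁ z).2
  obtain ⟨hpo₂, hio₂⟩ := (h₂ z).2
  refine ⟨fun ⟨hp, hi⟩ => ?_, fun ⟨hp, ho⟩ => ?_,
    fun ⟨hi, ho⟩ => hio₁ ⟨(hinv.1 hi).1, (hoth.1 ho).1⟩⟩
  · rcases hproc.1 hp with ⟨-, ho₂⟩ | ⟨-, ho₁⟩
    exacts [hio₂ ⟨(hinv.1 hi).2, ho₂⟩, hio₁ ⟨(hinv.1 hi).1, ho₁⟩]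
  · rcases hproc.1 hp with ⟨hp₁, -⟩ | ⟨hp₂, -⟩
    exacts [hpo₁ ⟨hp₁, (hoth.1 ho).1⟩, hpo₂ ⟨hp₂, (hoth.1 ho).2⟩]

theorem assoc {W₁₁ W₁₂ : Set (OCond Z)} (h : OSplit W W₁ W₂) (h₁ : OSplit W₁ W₁₁ W₁₂) :
    OSplit W W₁₁ (ownershipJoin W₁₂ W₂) := fun z => by
  obtain ⟨hoth, hinv, hproc⟩ := h z
  obtain ⟨hoth₁, hinv₁, hproc₁⟩ := h₁ z
  obtain ⟨hoth', hinv', hproc'⟩ := osplit_ownershipJoin W₁₂ W₂ z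
  refine ⟨by rw [hoth, hoth₁, hoth', and_assoc], by rw [hinv, hinv₁, hinv', and_assoc], ?_⟩
  rw [hproc, hproc₁, hoth₁, hproc', hoth']
  clear hoth hinv hproc hoth₁ hinv₁ hproc₁ hoth' hinv' hproc'
  tauto

end OSplit

end

theorem ownership_split_symm_assoc_general {Z : Type*} (W W₁ W₂ W₁₁ W₁₂ : Set (OCond Z))
    (h2 : OConsistent W₂) (h12 : OConsistent W₁₂) :
    (OSplit W W₁ W₂ → OSplit W W₂ W₁) ∧
    (OSplit W W₁ W₂ → OSplit W₁ W₁₁ W₁₂ →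
      ∃ W' : Set (OCond Z), OConsistent W' ∧ OSplit W W₁₁ W' ∧ OSplit W' W₁₂ W₂) :=
  ⟨OSplit.symm, fun h h₁ =>
    ⟨ownershipJoin W₁₂ W₂, (osplit_ownershipJoin W₁₂ W₂).oconsistent h12 h2, h.assoc h₁,
      osplit_ownershipJoin W₁₂ W₂⟩⟩

theorem ownership_split_symm_assoc {Z : Type*} (W W₁ W₂ W₁₁ W₁₂ : Set (OCond Z))
    (hW : OConsistent W) (h1 : OConsistent W₁) (h2 : OConsistent W₂)
    (h11 : OConsistent W₁₁) (h12 : OConsistent W₁₂)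
    (hdom : ∀ z : Z, (owns W z ↔ owns W₁ z) ∧ (owns W z ↔ owns W₂ z) ∧
      (owns W z ↔ owns W₁₁ z) ∧ (owns W z ↔ owns W₁₂ z)) :
    (OSplit W W₁ W₂ → OSplit W W₂ W₁) ∧
    (OSplit W W₁ W₂ → OSplit W₁ W₁₁ W₁₂ →
      ∃ W' : Set (OCond Z), OConsistent W' ∧ OSplit W W₁₁ W' ∧ OSplit W' W₁₂ W₂) :=
  ownership_split_symm_assoc_general W W₁ W₂ W₁₁ W₁₂ h2 h12
end
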